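/- arXiv:1912.01143 — 2 statements merged into one kernel-verified Lean document; each statement's English description precedes it below -/
import Mathlib

section
/- Let m ≥ 2, r ≥ 1, and let c : {1, …, m−1} → {1, …, r} be a linear colouring of K_m such that for each colour s ∈ {1, …, r} there is no monochromatic complete subgraph on k_s vertices in colour s (where each k_s ≥ 2). Then there exists a cyclic colouring c'' of the complete graph K_{3m−1} in the r + 1 colours {1, …, r+1} such that: for each s ∈ {1, …, r} there is no monochromatic complete subgraph on k_s vertices in colour s, and there is no monochromatic triangle (complete subgraph on 3 vertices) in colour r + 1. -/
/-! Colour a length `l` of `K_{3m-1}` through its circular length `d = min l (3m-1-l)`: by `c d`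
if `d < m`, by the new colour `r + 1` otherwise. Three points at pairwise circular distance at
least `m` need a cycle of length at least `3m`, so colour `r + 1` has no triangle. In a clique of
an old colour all circular distances are below `m`; the arc spanned by a pair at maximal distance
`D`, with `3D < 3m - 1`, contains every other point of the clique, so a rotation moves the clique
onto `{0, …, m - 1}`. There circular and linear distances agree, which yields a clique of the same
colour in `K_m`. -/

/-- `HasMonoClique col s k` : the complete graph on `Fin n`, with each edge `{i, j}`
coloured `col i j`, contains a monochromatic complete subgraph on `k` vertices in
colour `s`, i.e. a set of `k` vertices all of whose connecting edges have colour `s`. -/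
def HasMonoClique {n : ℕ} (col : Fin n → Fin n → ℕ) (s k : ℕ) : Prop :=
  ∃ S : Finset (Fin n), S.card = k ∧ ∀ i ∈ S, ∀ j ∈ S, i ≠ j → col i j = s

/-- The linear colouring of `K_n` determined by the length-colouring `c` :
the edge `{i, j}` receives colour `c (|i - j|)`. -/
def linCol (n : ℕ) (c : ℕ → ℕ) (i j : Fin n) : ℕ :=
  c (max i.val j.val - min i.val j.val)

theorem HasMonoClique.of_injOn {n n' : ℕ} {col : Fin n → Fin n → ℕ}
    {col' : Fin n' → Fin n' → ℕ} {s : ℕ} {S : Finset (Fin n)}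
    (hS : ∀ i ∈ S, ∀ j ∈ S, i ≠ j → col i j = s) (f : Fin n → Fin n')
    (hf : Set.InjOn f S) (hcol : ∀ i ∈ S, ∀ j ∈ S, i ≠ j → col' (f i) (f j) = col i j) :
    HasMonoClique col' s S.card := by
  refine ⟨S.image f, Finset.card_image_of_injOn hf, ?_⟩
  simp only [Finset.mem_image]
  rintro _ ⟨i, hi, rfl⟩ _ ⟨j, hj, rfl⟩ hij
  have hne : i ≠ j := by rintro rfl; exact hij rfl
  rw [hcol i hi j hj hne, hS i hi j hj hne]

section CircularDistance

variable {N : ℕ}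

def circDist (i j : Fin N) : ℕ :=
  min (max i.val j.val - min i.val j.val) (N - (max i.val j.val - min i.val j.val))

theorem Fin.val_sub_cases (a b : Fin N) :
    b.val ≤ a.val ∧ (a - b).val = a.val - b.val ∨
      a.val < b.val ∧ (a - b).val = N + a.val - b.val := by
  rcases le_or_gt b a with h | h
  · exact Or.inl ⟨h, Fin.coe_sub_iff_le.mpr h⟩
  · exact Or.inr ⟨h, Fin.coe_sub_iff_lt.mpr h⟩

theorem circDist_pos {i j : Fin N} (h : i ≠ j) : 0 < circDist i j := by
  have := Fin.val_ne_of_ne h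
  have := i.isLt; have := j.isLt
  unfold circDist; omega

theorem circDist_sub_right (i j b : Fin N) : circDist (i - b) (j - b) = circDist i j := by
  have := i.isLt; have := j.isLt; have := b.isLt
  unfold circDist
  rcases Fin.val_sub_cases i b with ⟨_, hi⟩ | ⟨_, hi⟩ <;>
    rcases Fin.val_sub_cases j b with ⟨_, hj⟩ | ⟨_, hj⟩ <;> omega

theorem circDist_eq_of_val_le {D : ℕ} {i j : Fin N} (hi : i.val ≤ D) (hj : j.val ≤ D)
    (hN : 2 * D < N) : circDist i j = max i.val j.val - min i.val j.val := by
  unfold circDist; omega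

theorem circDist_eq_val_sub_or_eq_val_sub (i j : Fin N) :
    circDist i j = (j - i).val ∨ circDist i j = (i - j).val := by
  have := i.isLt; have := j.isLt
  unfold circDist
  rcases Fin.val_sub_cases j i with ⟨_, h⟩ | ⟨_, h⟩ <;>
    rcases Fin.val_sub_cases i j with ⟨_, h'⟩ | ⟨_, h'⟩ <;> omega

theorem three_mul_le_of_le_circDist {m : ℕ} {a b d : Fin N} (hab : m ≤ circDist a b)
    (had : m ≤ circDist a d) (hbd : m ≤ circDist b d) : 3 * m ≤ N := by
  have := a.isLt; have := b.isLt; have := d.isLt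
  unfold circDist at *; omega

theorem val_sub_le_of_circDist_le {b t v : Fin N} (hN : 3 * (t - b).val < N)
    (hb : circDist v b ≤ (t - b).val) (ht : circDist v t ≤ (t - b).val) :
    (v - b).val ≤ (t - b).val := by
  have := b.isLt; have := t.isLt; have := v.isLt
  unfold circDist at hb ht
  rcases Fin.val_sub_cases t b with ⟨_, h⟩ | ⟨_, h⟩ <;>
    rcases Fin.val_sub_cases v b with ⟨_, h'⟩ | ⟨_, h'⟩ <;> omega

theorem exists_val_sub_le_of_circDist_le {D : ℕ} (hN : 3 * D < N) (S : Finset (Fin N))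
    (hS : ∀ u ∈ S, ∀ v ∈ S, circDist u v ≤ D) : ∃ b : Fin N, ∀ v ∈ S, (v - b).val ≤ D := by
  rcases S.eq_empty_or_nonempty with rfl | ⟨x, hx⟩
  · exact ⟨⟨0, by omega⟩, by simp⟩
  obtain ⟨⟨x, y⟩, hxy, hmax⟩ :=
    (S ×ˢ S).exists_max_image (fun p => circDist p.1 p.2) ⟨(x, x), Finset.mk_mem_product hx hx⟩
  obtain ⟨hx, hy⟩ := Finset.mem_product.mp hxy
  have hmax' : ∀ u ∈ S, ∀ v ∈ S, circDist u v ≤ circDist x y :=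
    fun u hu v hv => hmax (u, v) (Finset.mk_mem_product hu hv)
  obtain ⟨b, hb, t, ht, hbt⟩ : ∃ b ∈ S, ∃ t ∈ S, (t - b).val = circDist x y := by
    rcases circDist_eq_val_sub_or_eq_val_sub x y with h | h
    · exact ⟨x, hx, y, hy, h.symm⟩
    · exact ⟨y, hy, x, hx, h.symm⟩
  refine ⟨b, fun v hv => ?_⟩
  have hD := hS x hx y hy
  have := val_sub_le_of_circDist_le (v := v) (by omega) (hbt ▸ hmax' v hv b hb)
    (hbt ▸ hmax' v hv t ht)
  omega

end CircularDistance

section CyclicExtension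

variable (m r : ℕ) (c : ℕ → ℕ)

def cyclicExtension (l : ℕ) : ℕ :=
  if min l (3 * m - 1 - l) < m then c (min l (3 * m - 1 - l)) else r + 1

theorem linCol_cyclicExtension (i j : Fin (3 * m - 1)) :
    linCol (3 * m - 1) (cyclicExtension m r c) i j =
      if circDist i j < m then c (circDist i j) else r + 1 :=
  rfl

variable {m r c}

theorem cyclicExtension_sub {l : ℕ} (hl : l ≤ 3 * m - 1) :
    cyclicExtension m r c (3 * m - 1 - l) = cyclicExtension m r c l := by
  rw [cyclicExtension, cyclicExtension, Nat.sub_sub_self hl, min_comm]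

theorem cyclicExtension_mem (hc : ∀ l, 1 ≤ l → l ≤ m - 1 → 1 ≤ c l ∧ c l ≤ r) {l : ℕ}
    (hl₁ : 1 ≤ l) (hl₂ : l ≤ 3 * m - 2) :
    1 ≤ cyclicExtension m r c l ∧ cyclicExtension m r c l ≤ r + 1 := by
  unfold cyclicExtension
  split_ifs with h
  · have := hc (min l (3 * m - 1 - l)) (by omega) (by omega); omega
  · omega

theorem not_hasMonoClique_cyclicExtension (hm : 1 ≤ m) {s k : ℕ} (hs : s ≤ r)
    (hU : ¬ HasMonoClique (linCol m c) s k) :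
    ¬ HasMonoClique (linCol (3 * m - 1) (cyclicExtension m r c)) s k := by
  rintro ⟨S, rfl, hS⟩
  have hshort : ∀ u ∈ S, ∀ v ∈ S, u ≠ v → circDist u v < m ∧ c (circDist u v) = s := by
    intro u hu v hv huv
    have := hS u hu v hv huv
    rw [linCol_cyclicExtension] at this
    split_ifs at this with h
    · exact ⟨h, this⟩
    · omega
  obtain ⟨b, hb⟩ := exists_val_sub_le_of_circDist_le (D := m - 1) (by omega) S fun u hu v hv => by
    rcases eq_or_ne u v with rfl | huv
    · simp [circDist]
    · have := (hshort u hu v hv huv).1; omega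
  have hlt : ∀ v ∈ S, (v - b).val < m := fun v hv => by have := hb v hv; omega
  let f : Fin (3 * m - 1) → Fin m := fun v => ⟨(v - b).val % m, Nat.mod_lt _ (by omega)⟩
  have hf : ∀ v ∈ S, (f v).val = (v - b).val := fun v hv => Nat.mod_eq_of_lt (hlt v hv)
  refine hU (HasMonoClique.of_injOn (fun u hu v hv huv => (hshort u hu v hv huv).2) f ?_ ?_)
  · intro u hu v hv huv
    have hval := congrArg Fin.val huv
    rw [hf u hu, hf v hv] at hval
    by_contra hne
    have hpos := circDist_pos hne
    rw [← circDist_sub_right u v b, circDist, hval] at hpos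
    omega
  · intro u hu v hv _
    rw [linCol, hf u hu, hf v hv, ← circDist_eq_of_val_le (hb u hu) (hb v hv) (by omega),
      circDist_sub_right]

theorem not_hasMonoClique_cyclicExtension_triangle (hm : 1 ≤ m)
    (hc : ∀ l, 1 ≤ l → l ≤ m - 1 → 1 ≤ c l ∧ c l ≤ r) :
    ¬ HasMonoClique (linCol (3 * m - 1) (cyclicExtension m r c)) (r + 1) 3 := by
  rintro ⟨S, hS3, hS⟩
  have hlong : ∀ u ∈ S, ∀ v ∈ S, u ≠ v → m ≤ circDist u v := by
    intro u hu v hv huv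
    have hcol := hS u hu v hv huv
    rw [linCol_cyclicExtension] at hcol
    split_ifs at hcol with h
    · have := hc _ (circDist_pos huv) (by omega); omega
    · omega
  obtain ⟨a, b, d, hab, had, hbd, rfl⟩ := Finset.card_eq_three.mp hS3
  have := three_mul_le_of_le_circDist (hlong a (by simp) b (by simp) hab)
    (hlong a (by simp) d (by simp) had) (hlong b (by simp) d (by simp) hbd)
  omega

end CyclicExtension

theorem stmt_1_general (m r : ℕ) (hm : 2 ≤ m) (c : ℕ → ℕ)
    (hc : ∀ l, 1 ≤ l → l ≤ m - 1 → 1 ≤ c l ∧ c l ≤ r)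
    (k : ℕ → ℕ)
    (hU : ∀ s, 1 ≤ s → s ≤ r → ¬ HasMonoClique (linCol m c) s (k s)) :
    ∃ c'' : ℕ → ℕ,
      (∀ l, 1 ≤ l → l ≤ 3 * m - 2 → 1 ≤ c'' l ∧ c'' l ≤ r + 1) ∧
      (∀ l, 1 ≤ l → l ≤ 3 * m - 2 → c'' l = c'' (3 * m - 1 - l)) ∧
      (∀ s, 1 ≤ s → s ≤ r → ¬ HasMonoClique (linCol (3 * m - 1) c'') s (k s)) ∧
      ¬ HasMonoClique (linCol (3 * m - 1) c'') (r + 1) 3 :=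
  ⟨cyclicExtension m r c, fun _ hl₁ hl₂ => cyclicExtension_mem hc hl₁ hl₂,
    fun _ _ hl₂ => (cyclicExtension_sub (by omega)).symm,
    fun s hs₁ hs₂ => not_hasMonoClique_cyclicExtension (by omega) hs₂ (hU s hs₁ hs₂),
    not_hasMonoClique_cyclicExtension_triangle (by omega) hc⟩

/-- From a linear colouring of `K_m` avoiding a `k s`-clique in each
colour `s ∈ {1, …, r}`, there exists a cyclic colouring of `K_{3m-1}` in the colours
`{1, …, r+1}` avoiding a `k s`-clique in each colour `s ∈ {1, …, r}` and avoiding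
triangles in colour `r + 1`. -/
theorem stmt_1 (m r : ℕ) (hm : 2 ≤ m) (hr : 1 ≤ r) (c : ℕ → ℕ)
    (hc : ∀ l, 1 ≤ l → l ≤ m - 1 → 1 ≤ c l ∧ c l ≤ r)
    (k : ℕ → ℕ) (hk : ∀ s, 1 ≤ s → s ≤ r → 2 ≤ k s)
    (hU : ∀ s, 1 ≤ s → s ≤ r → ¬ HasMonoClique (linCol m c) s (k s)) :
    ∃ c'' : ℕ → ℕ,
      (∀ l, 1 ≤ l → l ≤ 3 * m - 2 → 1 ≤ c'' l ∧ c'' l ≤ r + 1) ∧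
      (∀ l, 1 ≤ l → l ≤ 3 * m - 2 → c'' l = c'' (3 * m - 1 - l)) ∧
      (∀ s, 1 ≤ s → s ≤ r → ¬ HasMonoClique (linCol (3 * m - 1) c'') s (k s)) ∧
      ¬ HasMonoClique (linCol (3 * m - 1) c'') (r + 1) 3 :=
  stmt_1_general m r hm c hc k hU
end

section
/- Let m ≥ 2, r ≥ 1, and let c : {1, …, m−1} → {1, …, r} be a linear colouring of K_m such that for each colour s ∈ {1, …, r} there is no monochromatic complete subgraph on k_s vertices in colour s (where each k_s ≥ 2). Define a colouring c' : {1, …, 3m−2} → {1, …, r+1} by c'(l) = c(l) for 1 ≤ l ≤ m−1, c'(l) = r+1 for m ≤ l ≤ 2m−1, and c'(l) = c(l − (2m−1)) for 2m ≤ l ≤ 3m−2. Then the linear colouring of K_{3m−1} determined by c' has, for each s ∈ {1, …, r}, no monochromatic complete subgraph on k_s vertices in colour s, and has no monochromatic triangle in colour r + 1. -/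
theorem linCol_of_lt {n : ℕ} (c : ℕ → ℕ) {i j : Fin n} (h : i.val < j.val) :
    linCol n c i j = c (j.val - i.val) := by
  simp only [linCol, max_eq_right h.le, min_eq_left h.le]

theorem linCol_comm {n : ℕ} (c : ℕ → ℕ) (i j : Fin n) :
    linCol n c i j = linCol n c j i := by
  simp only [linCol, max_comm, min_comm]

theorem hasMonoClique_linCol_iff {n : ℕ} {c : ℕ → ℕ} {s k : ℕ} :
    HasMonoClique (linCol n c) s k ↔
      ∃ S : Finset ℕ, S.card = k ∧ (∀ x ∈ S, x < n) ∧
        ∀ x ∈ S, ∀ y ∈ S, x < y → c (y - x) = s := by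
  constructor
  · rintro ⟨S, hcard, hmono⟩
    refine ⟨S.map Fin.valEmbedding, by rw [Finset.card_map, hcard], ?_, ?_⟩
    · simp only [Finset.mem_map, Fin.valEmbedding_apply]
      rintro _ ⟨i, -, rfl⟩
      exact i.isLt
    · simp only [Finset.mem_map, Fin.valEmbedding_apply]
      rintro _ ⟨i, hi, rfl⟩ _ ⟨j, hj, rfl⟩ hij
      rw [← linCol_of_lt c hij]
      exact hmono i hi j hj (Fin.ne_of_lt hij)
  · rintro ⟨S, hcard, hlt, hmono⟩
    refine ⟨S.attachFin hlt, by rw [Finset.card_attachFin, hcard], ?_⟩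
    simp only [Finset.mem_attachFin]
    intro i hi j hj hij
    rcases Fin.lt_or_lt_of_ne hij with h | h
    · rw [linCol_of_lt c h]
      exact hmono i hi j hj h
    · rw [linCol_comm, linCol_of_lt c h]
      exact hmono j hj i hi h

section Construction

variable {m r : ℕ} {c c' : ℕ → ℕ}

theorem colour_eq_add_one_iff (hc : ∀ l, 1 ≤ l → l ≤ m - 1 → 1 ≤ c l ∧ c l ≤ r)
    (hc'1 : ∀ l, 1 ≤ l → l ≤ m - 1 → c' l = c l)
    (hc'2 : ∀ l, m ≤ l → l ≤ 2 * m - 1 → c' l = r + 1)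
    (hc'3 : ∀ l, 2 * m ≤ l → l ≤ 3 * m - 2 → c' l = c (l - (2 * m - 1)))
    {l : ℕ} (hl1 : 1 ≤ l) (hl2 : l ≤ 3 * m - 2) :
    c' l = r + 1 ↔ m ≤ l ∧ l < 2 * m := by
  rcases Nat.lt_or_ge l m with h1 | h1
  · have := (hc l hl1 (by omega)).2
    rw [hc'1 l hl1 (by omega)]
    omega
  rcases Nat.lt_or_ge l (2 * m) with h2 | h2
  · simp only [hc'2 l h1 (by omega), h1, h2, and_self]
  · have := (hc (l - (2 * m - 1)) (by omega) (by omega)).2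
    rw [hc'3 l h2 hl2]
    omega

theorem card_le_two_of_sub_mem_Ico {S : Finset ℕ}
    (hS : ∀ x ∈ S, ∀ y ∈ S, x < y → m ≤ y - x ∧ y - x < 2 * m) : S.card ≤ 2 := by
  by_contra! h
  obtain ⟨x, hx, y, hy, z, hz, hxy, hxz, hyz⟩ := Finset.two_lt_card.1 h
  have := hS x hx y hy; have := hS y hy x hx
  have := hS x hx z hz; have := hS z hz x hx
  have := hS y hy z hz; have := hS z hz y hy
  omega

def fold (m a x : ℕ) : ℕ :=
  if x - a < m then x - a else x - a - (2 * m - 1)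

theorem fold_lt {a x : ℕ} (hx : x < 3 * m - 1) : fold m a x < m := by
  unfold fold
  split_ifs <;> omega

variable {a x y : ℕ}

theorem fold_lt_fold (hax : a ≤ x) (hxy : x < y)
    (hya : y - a < m ∨ 2 * m ≤ y - a) (hyx : y - x < m ∨ 2 * m ≤ y - x) :
    fold m a x < fold m a y := by
  unfold fold
  split_ifs <;> omega

theorem colour_fold_sub_fold (hc'1 : ∀ l, 1 ≤ l → l ≤ m - 1 → c' l = c l)
    (hc'3 : ∀ l, 2 * m ≤ l → l ≤ 3 * m - 2 → c' l = c (l - (2 * m - 1)))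
    (hax : a ≤ x) (hxy : x < y) (hy : y < 3 * m - 1) (hxa : x - a < m ∨ 2 * m ≤ x - a)
    (hya : y - a < m ∨ 2 * m ≤ y - a) (hyx : y - x < m ∨ 2 * m ≤ y - x) :
    c (fold m a y - fold m a x) = c' (y - x) := by
  unfold fold
  split_ifs with hy_low hx_low hx_low
  · rw [hc'1 (y - x) (by omega) (by omega)]
    congr 1
    omega
  · omega
  · rw [hc'3 (y - x) (by omega) (by omega)]
    congr 1
    omega
  · rw [hc'1 (y - x) (by omega) (by omega)]
    congr 1
    omega

theorem exists_fold_clique (hc'1 : ∀ l, 1 ≤ l → l ≤ m - 1 → c' l = c l)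
    (hc'3 : ∀ l, 2 * m ≤ l → l ≤ 3 * m - 2 → c' l = c (l - (2 * m - 1)))
    {s : ℕ} {S : Finset ℕ} (hS : ∀ x ∈ S, x < 3 * m - 1)
    (hmono : ∀ x ∈ S, ∀ y ∈ S, x < y → c' (y - x) = s)
    (hgap : ∀ x ∈ S, ∀ y ∈ S, x < y → y - x < m ∨ 2 * m ≤ y - x) :
    ∃ T : Finset ℕ, T.card = S.card ∧ (∀ x ∈ T, x < m) ∧
      ∀ x ∈ T, ∀ y ∈ T, x < y → c (y - x) = s := by
  rcases S.eq_empty_or_nonempty with rfl | hne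
  · exact ⟨∅, rfl, by simp, by simp⟩
  set a := S.min' hne
  have hgap_a : ∀ x ∈ S, x - a < m ∨ 2 * m ≤ x - a := fun x hx => by
    rcases (S.min'_le x hx).lt_or_eq with h | h
    · exact hgap a (S.min'_mem hne) x hx h
    · have := hS x hx
      omega
  have hmonoOn : StrictMonoOn (fold m a) S := fun x hx y hy hxy =>
    fold_lt_fold (S.min'_le x hx) hxy (hgap_a y hy) (hgap x hx y hy hxy)
  refine ⟨S.image (fold m a), Finset.card_image_of_injOn hmonoOn.injOn, ?_, ?_⟩
  · simp only [Finset.mem_image]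
    rintro _ ⟨x, hx, rfl⟩
    exact fold_lt (hS x hx)
  · simp only [Finset.mem_image]
    rintro _ ⟨x, hx, rfl⟩ _ ⟨y, hy, rfl⟩ hlt
    have hxy : x < y := (hmonoOn.lt_iff_lt hx hy).1 hlt
    rw [colour_fold_sub_fold hc'1 hc'3 (S.min'_le x hx) hxy (hS y hy)
      (hgap_a x hx) (hgap_a y hy) (hgap x hx y hy hxy)]
    exact hmono x hx y hy hxy

end Construction

theorem stmt_2_general (m r : ℕ) (c : ℕ → ℕ)
    (hc : ∀ l, 1 ≤ l → l ≤ m - 1 → 1 ≤ c l ∧ c l ≤ r)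
    (k : ℕ → ℕ)
    (hU : ∀ s, 1 ≤ s → s ≤ r → ¬ HasMonoClique (linCol m c) s (k s))
    (c' : ℕ → ℕ)
    (hc'1 : ∀ l, 1 ≤ l → l ≤ m - 1 → c' l = c l)
    (hc'2 : ∀ l, m ≤ l → l ≤ 2 * m - 1 → c' l = r + 1)
    (hc'3 : ∀ l, 2 * m ≤ l → l ≤ 3 * m - 2 → c' l = c (l - (2 * m - 1))) :
    (∀ s, 1 ≤ s → s ≤ r → ¬ HasMonoClique (linCol (3 * m - 1) c') s (k s)) ∧
    ¬ HasMonoClique (linCol (3 * m - 1) c') (r + 1) 3 := by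
  have hnew {x y : ℕ} (hxy : x < y) (hy : y < 3 * m - 1) :
      c' (y - x) = r + 1 ↔ m ≤ y - x ∧ y - x < 2 * m :=
    colour_eq_add_one_iff hc hc'1 hc'2 hc'3 (by omega) (by omega)
  refine ⟨fun s hs1 hs2 hclique => ?_, fun hclique => ?_⟩
  · obtain ⟨S, hcard, hS, hmono⟩ := hasMonoClique_linCol_iff.1 hclique
    have hgap : ∀ x ∈ S, ∀ y ∈ S, x < y → y - x < m ∨ 2 * m ≤ y - x := by
      intro x hx y hy hxy
      have := hnew hxy (hS y hy)
      have := hmono x hx y hy hxy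
      omega
    refine hU s hs1 hs2 (hasMonoClique_linCol_iff.2 ?_)
    rw [← hcard]
    exact exists_fold_clique hc'1 hc'3 hS hmono hgap
  · obtain ⟨S, hcard, hS, hmono⟩ := hasMonoClique_linCol_iff.1 hclique
    have := card_le_two_of_sub_mem_Ico fun x hx y hy hxy =>
      (hnew hxy (hS y hy)).1 (hmono x hx y hy hxy)
    omega

/-- The explicit linear colouring `c'` of `K_{3m-1}` (copy of `c` on
lengths `1, …, m-1`, colour `r+1` on lengths `m, …, 2m-1`, shifted copy of `c` on
lengths `2m, …, 3m-2`) avoids a `k s`-clique in each colour `s ∈ {1, …, r}` and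
avoids triangles in colour `r + 1`. -/
theorem stmt_2 (m r : ℕ) (hm : 2 ≤ m) (hr : 1 ≤ r) (c : ℕ → ℕ)
    (hc : ∀ l, 1 ≤ l → l ≤ m - 1 → 1 ≤ c l ∧ c l ≤ r)
    (k : ℕ → ℕ) (hk : ∀ s, 1 ≤ s → s ≤ r → 2 ≤ k s)
    (hU : ∀ s, 1 ≤ s → s ≤ r → ¬ HasMonoClique (linCol m c) s (k s))
    (c' : ℕ → ℕ)
    (hc'1 : ∀ l, 1 ≤ l → l ≤ m - 1 → c' l = c l)
    (hc'2 : ∀ l, m ≤ l → l ≤ 2 * m - 1 → c' l = r + 1)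
    (hc'3 : ∀ l, 2 * m ≤ l → l ≤ 3 * m - 2 → c' l = c (l - (2 * m - 1))) :
    (∀ s, 1 ≤ s → s ≤ r → ¬ HasMonoClique (linCol (3 * m - 1) c') s (k s)) ∧
    ¬ HasMonoClique (linCol (3 * m - 1) c') (r + 1) 3 :=
  stmt_2_general m r c hc k hU c' hc'1 hc'2 hc'3
end
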